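/- Let p and q̂ be probability mass functions on a finite type V of cardinality N with TV(p, q̂) ≤ δ, and let μ ∈ (0, 1). Define the smoothed distribution q^μ(x) := (1−μ)·q̂(x) + μ/N. Then: (a) q^μ(x) ≥ μ/N for all x; (b) TV(p, q^μ) ≤ δ + μ; (c) KL(p‖q^μ) ≤ 2·N·(δ + μ)²/μ; and (d) in particular, choosing μ = δ ∈ (0,1) gives KL(p‖q^δ) ≤ 8·N·δ, a bound linear in δ. -/

import Mathlib

open Finset

/-- Total variation distance between two pmfs on a finite type. -/
noncomputable def TV {V : Type*} [Fintype V] (p q : V → ℝ) : ℝ :=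
  (1 / 2) * ∑ x, |p x - q x|

/-- Kullback–Leibler divergence between two pmfs on a finite type. -/
noncomputable def KL {V : Type*} [Fintype V] (p q : V → ℝ) : ℝ :=
  ∑ x, p x * Real.log (p x / q x)

/-!
Mixing `μ` of the uniform distribution into `q̂` puts a floor `μ/N` under the decoder and moves it
by at most `μ` in total variation. Bounding `log t ≤ t - 1` termwise turns KL into the χ²-type sum
`∑ (p - q)² / q ≤ (N/μ) ∑ (p - q)²`, and since every single `|p x - q x|` is at most the total
variation `ε`, the sum of squares is at most `ε · 2ε`. This gives `KL ≤ 2N(δ+μ)²/μ`, and `μ = δ`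
balances the two sources of error.
-/

section

variable {V : Type*} [Fintype V]

lemma TV_nonneg (p q : V → ℝ) : 0 ≤ TV p q :=
  mul_nonneg (by norm_num) (sum_nonneg fun x _ => abs_nonneg (p x - q x))

lemma TV_le_add (p q r : V → ℝ) : TV p r ≤ TV p q + TV q r := by
  unfold TV
  rw [← mul_add, ← sum_add_distrib]
  gcongr with x
  exact abs_sub_le _ _ _

lemma abs_sub_le_TV {p q : V → ℝ} (h : ∑ x, p x = ∑ x, q x) (x : V) :
    |p x - q x| ≤ TV p q := by
  classical
  have hrest : p x - q x = -∑ y ∈ univ.erase x, (p y - q y) := by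
    have hzero : ∑ y, (p y - q y) = 0 := by rw [sum_sub_distrib, h, sub_self]
    linarith [sum_erase_add univ (fun y => p y - q y) (mem_univ x)]
  have hsplit := sum_erase_add univ (fun y => |p y - q y|) (mem_univ x)
  have : |p x - q x| ≤ ∑ y ∈ univ.erase x, |p y - q y| := by
    rw [hrest, abs_neg]
    exact abs_sum_le_sum_abs _ _
  unfold TV
  linarith

lemma sum_sq_sub_le_two_mul_TV_sq {p q : V → ℝ} (h : ∑ x, p x = ∑ x, q x) :
    ∑ x, (p x - q x) ^ 2 ≤ 2 * TV p q ^ 2 :=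
  calc ∑ x, (p x - q x) ^ 2 = ∑ x, |p x - q x| * |p x - q x| := by
        simp only [← sq, sq_abs]
    _ ≤ ∑ x, TV p q * |p x - q x| := by
        gcongr with x
        exact abs_sub_le_TV h x
    _ = 2 * TV p q ^ 2 := by
        rw [← mul_sum, TV]
        ring

lemma mul_log_div_le {a b : ℝ} (ha : 0 ≤ a) (hb : 0 < b) :
    a * Real.log (a / b) ≤ (a - b) ^ 2 / b + (a - b) := by
  have hlog : a * Real.log (a / b) ≤ a * (a / b - 1) := by
    rcases ha.eq_or_lt with rfl | ha
    · simp
    · exact mul_le_mul_of_nonneg_left (Real.log_le_sub_one_of_pos (by positivity)) ha.le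
  have hid : a * (a / b - 1) = (a - b) ^ 2 / b + (a - b) := by
    field_simp
    ring
  exact hid ▸ hlog

lemma KL_le_sum_sq_sub_div {p q : V → ℝ} (hp : ∀ x, 0 ≤ p x) (hq : ∀ x, 0 < q x)
    (h : ∑ x, p x = ∑ x, q x) : KL p q ≤ ∑ x, (p x - q x) ^ 2 / q x :=
  calc KL p q ≤ ∑ x, ((p x - q x) ^ 2 / q x + (p x - q x)) :=
        sum_le_sum fun x _ => mul_log_div_le (hp x) (hq x)
    _ = ∑ x, (p x - q x) ^ 2 / q x := by
        rw [sum_add_distrib, sum_sub_distrib, h, sub_self, add_zero]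

lemma KL_le_two_mul_TV_sq_div {p q : V → ℝ} {c : ℝ} (hp : ∀ x, 0 ≤ p x) (hc : 0 < c)
    (hq : ∀ x, c ≤ q x) (h : ∑ x, p x = ∑ x, q x) : KL p q ≤ 2 * TV p q ^ 2 / c :=
  calc KL p q ≤ ∑ x, (p x - q x) ^ 2 / q x :=
        KL_le_sum_sq_sub_div hp (fun x => hc.trans_le (hq x)) h
    _ ≤ ∑ x, (p x - q x) ^ 2 / c := by
        gcongr with x
        exact hq x
    _ ≤ 2 * TV p q ^ 2 / c := by
        rw [← sum_div]
        gcongr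
        exact sum_sq_sub_le_two_mul_TV_sq h

/-- The paper's smoothed decoder `q^μ`. -/
noncomputable def smooth (μ : ℝ) (q : V → ℝ) : V → ℝ :=
  fun x => (1 - μ) * q x + μ / Fintype.card V

lemma div_card_le_smooth {μ : ℝ} {q : V → ℝ} (hq : ∀ x, 0 ≤ q x) (hμ : μ ≤ 1) (x : V) :
    μ / Fintype.card V ≤ smooth μ q x := by
  have := mul_nonneg (sub_nonneg.mpr hμ) (hq x)
  unfold smooth
  linarith

variable [Nonempty V]

lemma sum_smooth (μ : ℝ) {q : V → ℝ} (hq : ∑ x, q x = 1) : ∑ x, smooth μ q x = 1 := by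
  have hN : (Fintype.card V : ℝ) ≠ 0 := Nat.cast_ne_zero.mpr Fintype.card_ne_zero
  simp only [smooth, sum_add_distrib, ← mul_sum, hq, sum_const, card_univ, nsmul_eq_mul]
  field_simp
  ring

lemma TV_smooth_right_le {μ : ℝ} {q : V → ℝ} (hq0 : ∀ x, 0 ≤ q x) (hq1 : ∑ x, q x = 1)
    (hμ : 0 ≤ μ) : TV q (smooth μ q) ≤ μ := by
  have hN : (Fintype.card V : ℝ) ≠ 0 := Nat.cast_ne_zero.mpr Fintype.card_ne_zero
  have hN0 : (0 : ℝ) ≤ 1 / Fintype.card V := by positivity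
  calc TV q (smooth μ q) = μ / 2 * ∑ x, |q x - 1 / Fintype.card V| := by
        simp only [TV, smooth, mul_sum]
        refine sum_congr rfl fun x _ => ?_
        rw [show q x - ((1 - μ) * q x + μ / Fintype.card V) = μ * (q x - 1 / Fintype.card V) by
          ring, abs_mul, abs_of_nonneg hμ]
        ring
    _ ≤ μ / 2 * ∑ x, (q x + 1 / Fintype.card V) := by
        gcongr with x
        exact (abs_sub _ _).trans_eq (by rw [abs_of_nonneg (hq0 x), abs_of_nonneg hN0])
    _ = μ := by
        rw [sum_add_distrib, hq1, sum_const, card_univ, nsmul_eq_mul]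
        field_simp
        ring

lemma TV_smooth_le {p q : V → ℝ} {δ μ : ℝ} (hq0 : ∀ x, 0 ≤ q x) (hq1 : ∑ x, q x = 1)
    (hTV : TV p q ≤ δ) (hμ : 0 ≤ μ) : TV p (smooth μ q) ≤ δ + μ :=
  (TV_le_add p q _).trans (add_le_add hTV (TV_smooth_right_le hq0 hq1 hμ))

lemma KL_smooth_le {p q : V → ℝ} {δ μ : ℝ} (hp0 : ∀ x, 0 ≤ p x) (hp1 : ∑ x, p x = 1)
    (hq0 : ∀ x, 0 ≤ q x) (hq1 : ∑ x, q x = 1) (hTV : TV p q ≤ δ) (hμ : μ ∈ Set.Ioo (0 : ℝ) 1) :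
    KL p (smooth μ q) ≤ 2 * (Fintype.card V : ℝ) * (δ + μ) ^ 2 / μ := by
  obtain ⟨hμ0, hμ1⟩ := hμ
  have hN : (0 : ℝ) < Fintype.card V := by exact_mod_cast Fintype.card_pos
  calc KL p (smooth μ q) ≤ 2 * TV p (smooth μ q) ^ 2 / (μ / Fintype.card V) :=
        KL_le_two_mul_TV_sq_div hp0 (by positivity) (div_card_le_smooth hq0 hμ1.le)
          (by rw [hp1, sum_smooth μ hq1])
    _ ≤ 2 * (δ + μ) ^ 2 / (μ / Fintype.card V) := by
        gcongr
        · exact TV_nonneg _ _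
        · exact TV_smooth_le hq0 hq1 hTV hμ0.le
    _ = 2 * (Fintype.card V : ℝ) * (δ + μ) ^ 2 / μ := by
        field_simp

end

/-- KL–TV conversion, smoothed-decoder form: with `q^μ := (1−μ)·q̂ + μ/N`,
(a) `q^μ` has floor `μ/N`; (b) `TV(p,q^μ) ≤ δ + μ`; (c) `KL(p‖q^μ) ≤ 2N(δ+μ)²/μ`;
(d) the choice `μ = δ ∈ (0,1)` gives the linear bound `KL(p‖q^δ) ≤ 8Nδ`. -/
theorem kl_tv_smoothed {V : Type*} [Fintype V] [Nonempty V] (p qhat : V → ℝ) (δ μ : ℝ)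
    (hp0 : ∀ x, 0 ≤ p x) (hp1 : ∑ x, p x = 1)
    (hq0 : ∀ x, 0 ≤ qhat x) (hq1 : ∑ x, qhat x = 1)
    (hTV : TV p qhat ≤ δ)
    (hμ : μ ∈ Set.Ioo (0 : ℝ) 1) :
    (∀ x, μ / (Fintype.card V : ℝ) ≤ (1 - μ) * qhat x + μ / (Fintype.card V : ℝ)) ∧
    TV p (fun x => (1 - μ) * qhat x + μ / (Fintype.card V : ℝ)) ≤ δ + μ ∧
    KL p (fun x => (1 - μ) * qhat x + μ / (Fintype.card V : ℝ)) ≤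
      2 * (Fintype.card V : ℝ) * (δ + μ) ^ 2 / μ ∧
    (δ ∈ Set.Ioo (0 : ℝ) 1 →
      KL p (fun x => (1 - δ) * qhat x + δ / (Fintype.card V : ℝ)) ≤
        8 * (Fintype.card V : ℝ) * δ) := by
  refine ⟨div_card_le_smooth hq0 hμ.2.le, TV_smooth_le hq0 hq1 hTV hμ.1.le,
    KL_smooth_le hp0 hp1 hq0 hq1 hTV hμ, fun hδ => ?_⟩
  refine (KL_smooth_le hp0 hp1 hq0 hq1 hTV hδ).trans_eq ?_
  field_simp [hδ.1.ne']
  ring
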